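/- Let d ≥ 1 and let S : ℂ → (ℂ^d → ℂ^d) be a family of maps satisfying, for all z ∈ ℂ: S_z ∘ S_{−z} = id and S_{−z} ∘ S_z = id (time-symmetry), and conj(S_z(x)) = S_{conj z}(conj x) for all x ∈ ℂ^d (realness), where conj denotes componentwise complex conjugation on ℂ^d. Let α_1, …, α_s ∈ ℂ satisfy the symmetric-conjugate condition α_{s+1−j} = conj(α_j) for j = 1, …, s, and for h ∈ ℝ define the composition ψ_h = S_{α_s h} ∘ S_{α_{s−1} h} ∘ ⋯ ∘ S_{α_1 h}. Then for every real h the adjoint of ψ_h equals its complex conjugate, i.e. ψ_{−h} ∘ (conj ∘ ψ_h ∘ conj) = id. -/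

import Mathlib

/-- Componentwise complex conjugation on `ℂ^d`. -/
def vecConj {d : ℕ} (x : Fin d → ℂ) : Fin d → ℂ := fun i => starRingEnd ℂ (x i)

/-!
Write `ψ_h` as the fold of `S` over the time steps `c_j = α_j h`. Realness moves the outer
conjugations inside, replacing every step `c_j` by `conj c_j`, and for real `h` the
symmetric-conjugate condition turns the sequence `(conj c_j)` into `(c_j)` reversed. So
`conj ∘ ψ_h ∘ conj` applies `S_{c_1}, …, S_{c_s}` in that order, while `ψ_{-h}` applies
`S_{-c_1}, …, S_{-c_s}`; time-symmetry cancels the two folds from the middle outwards.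
-/

theorem vecConj_vecConj {d : ℕ} (x : Fin d → ℂ) : vecConj (vecConj x) = x := by
  funext i
  simp [vecConj]

theorem List.reverse_ofFn {α : Type*} {n : ℕ} (f : Fin n → α) :
    (List.ofFn f).reverse = List.ofFn (f ∘ Fin.rev) := by
  rw [List.ofFn_eq_map, List.ofFn_eq_map, ← List.map_reverse, List.finRange_reverse,
    List.map_map]

theorem List.foldl_foldl_reverse_of_leftInverse {ι X : Type*} {f g : ι → X → X}
    (hgf : ∀ i, Function.LeftInverse (g i) (f i)) (l : List ι) (x : X) :
    l.foldl (fun y i => g i y) (l.reverse.foldl (fun y i => f i y) x) = x := by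
  induction l with
  | nil => rfl
  | cons a t ih =>
    simp only [List.reverse_cons, List.foldl_append, List.foldl_cons, List.foldl_nil, hgf a _, ih]

theorem List.foldl_apply_ofFn {α X : Type*} {n : ℕ} (F : α → X → X) (c : Fin n → α) (x : X) :
    (List.ofFn fun j => F (c j)).foldl (fun y f => f y) x =
      (List.ofFn c).foldl (fun y z => F z y) x := by
  rw [← Function.comp_def F c, ← List.map_ofFn, List.foldl_map]

theorem symmetric_conjugate_adjoint_eq_conj
    (d s : ℕ)
    (S : ℂ → (Fin d → ℂ) → (Fin d → ℂ))
    (hTS₂ : ∀ z : ℂ, S (-z) ∘ S z = id)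
    (hReal : ∀ (z : ℂ) (x : Fin d → ℂ), vecConj (S z x) = S (starRingEnd ℂ z) (vecConj x))
    (α : Fin s → ℂ)
    (hSC : ∀ j : Fin s, α (Fin.rev j) = starRingEnd ℂ (α j))
    (ψ : ℝ → (Fin d → ℂ) → (Fin d → ℂ))
    (hψ : ∀ (h : ℝ) (x : Fin d → ℂ),
      ψ h x = (List.ofFn fun j : Fin s => S (α j * (h : ℂ))).foldl (fun y f => f y) x)
    (h : ℝ) :
    ψ (-h) ∘ (vecConj ∘ ψ h ∘ vecConj) = id := by
  set L := List.ofFn fun j => α j * (h : ℂ)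
  have conj_steps : L.map (starRingEnd ℂ) = L.reverse := by
    simp only [L, List.map_ofFn, List.reverse_ofFn, Function.comp_def, hSC, map_mul,
      Complex.conj_ofReal]
  have conj_ψ (x) : vecConj (ψ h (vecConj x)) = L.reverse.foldl (fun y z => S z y) x := by
    rw [hψ, List.foldl_apply_ofFn, ← List.foldl_hom vecConj (g₂ := fun y z => S (starRingEnd ℂ z) y)
      fun y z => (hReal z y).symm, vecConj_vecConj, ← conj_steps, List.foldl_map]
  have ψ_neg (x) : ψ (-h) x = L.foldl (fun y z => S (-z) y) x := calc
    ψ (-h) x = (List.ofFn fun j => S (-(α j * h))).foldl (fun y f => f y) x := by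
      simp only [hψ, Complex.ofReal_neg, mul_neg]
    _ = _ := List.foldl_apply_ofFn (fun z => S (-z)) (fun j => α j * h) x
  funext x
  simp only [Function.comp_apply, id_eq, conj_ψ, ψ_neg]
  exact List.foldl_foldl_reverse_of_leftInverse (f := S) (fun z => congrFun (hTS₂ z)) L x
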